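/- Define c : [0,∞) → ℝ by c(0) = π²/6 and, for t > 0, c(t) = 2(-log Γ(t+1) + t·ψ(t+1))/t², where ψ is the digamma function. Then c(t) > 0 for all t ≥ 0, and c(t) → 0 as t → +∞. -/

import Mathlib

/-!
The numerator `N(t) = t ψ(t+1) - log Γ(t+1)` is controlled by the convexity of `log Γ` alone.
Since `log Γ x = log Γ (x+1) - log x`, the function `log Γ` is strictly convex on `(0, ∞)`, so the
chord from `1` (where `log Γ` vanishes) to `t+1` has slope `log Γ(t+1)/t < ψ(t+1)`: this is `N > 0`.
On the other side, the tangent at `1` gives `log Γ(t+1) ≥ t ψ(1)` and the chord from `x` to `x+1`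
gives `ψ(x) ≤ log x`, so `N(t) ≤ t (log(t+1) - ψ(1))` and `c(t) = O(log t / t)`.
-/

open Real Filter Set

namespace Real

theorem strictConvexOn_log_Gamma : StrictConvexOn ℝ (Ioi 0) (log ∘ Gamma) := by
  have hshift : ConvexOn ℝ (Ioi 0) (fun x => log (Gamma (x + 1))) :=
    (convexOn_log_Gamma.translate_left 1).subset (fun x (hx : 0 < x) => by
      change 0 < 1 + x; linarith) (convex_Ioi 0)
  refine (hshift.add_strictConvexOn strictConcaveOn_log_Ioi.neg).congr fun x (hx : 0 < x) => ?_
  simp [Gamma_add_one hx.ne', log_mul hx.ne' (Gamma_pos_of_pos hx).ne']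

theorem differentiableAt_log_Gamma {x : ℝ} (hx : 0 < x) : DifferentiableAt ℝ (log ∘ Gamma) x :=
  ((differentiableAt_Gamma fun m => by linarith [(Nat.cast_nonneg m : (0 : ℝ) ≤ m)]).log
    (Gamma_pos_of_pos hx).ne')

theorem log_Gamma_add_one_lt_mul_deriv {t : ℝ} (ht : 0 < t) :
    log (Gamma (t + 1)) < t * deriv (log ∘ Gamma) (t + 1) := by
  have h := strictConvexOn_log_Gamma.slope_lt_deriv (x := 1) (y := t + 1) (mem_Ioi.2 one_pos)
    (mem_Ioi.2 (by linarith)) (by linarith) (differentiableAt_log_Gamma (by linarith))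
  rw [slope_def_field] at h
  simp only [Function.comp_apply, Gamma_one, log_one, sub_zero, add_sub_cancel_right] at h
  rwa [div_lt_iff₀ ht, mul_comm] at h

theorem mul_deriv_log_Gamma_one_le {t : ℝ} (ht : 0 < t) :
    t * deriv (log ∘ Gamma) 1 ≤ log (Gamma (t + 1)) := by
  have h := convexOn_log_Gamma.deriv_le_slope (x := 1) (y := t + 1) (mem_Ioi.2 one_pos)
    (mem_Ioi.2 (by linarith)) (by linarith) (differentiableAt_log_Gamma one_pos)
  rw [slope_def_field] at h
  simp only [Function.comp_apply, Gamma_one, log_one, sub_zero, add_sub_cancel_right] at h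
  rwa [le_div_iff₀ ht, mul_comm] at h

theorem deriv_log_Gamma_le_log {x : ℝ} (hx : 0 < x) : deriv (log ∘ Gamma) x ≤ log x := by
  have h := convexOn_log_Gamma.deriv_le_slope hx (show 0 < x + 1 by linarith) (lt_add_one x)
    (differentiableAt_log_Gamma hx)
  rwa [slope_def_field, Function.comp_apply, Function.comp_apply, Gamma_add_one hx.ne',
    log_mul hx.ne' (Gamma_pos_of_pos hx).ne', add_sub_cancel_right, add_sub_cancel_left,
    div_one] at h

theorem tendsto_log_add_one_div_atTop : Tendsto (fun t => log (t + 1) / t) atTop (nhds 0) := by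
  have h := (tendsto_pow_log_div_mul_add_atTop 1 (-1) 1 one_ne_zero).comp
    (tendsto_atTop_add_const_right atTop 1 tendsto_id)
  refine h.congr fun t => ?_
  simp

end Real

/-- The curvature function `c` with `c(0) = π²/6` and
`c(t) = 2(-log Γ(t+1) + t ψ(t+1))/t²` for `t > 0` (where `ψ = (log Γ)'` is the
digamma function) is positive on `[0,∞)` and tends to `0` at `+∞`. -/
theorem curvature_pos_tendsto_zero (c : ℝ → ℝ)
    (hc0 : c 0 = π ^ 2 / 6)
    (hct : ∀ t : ℝ, 0 < t →
      c t = 2 * (-Real.log (Real.Gamma (t + 1))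
        + t * deriv (fun s : ℝ => Real.log (Real.Gamma s)) (t + 1)) / t ^ 2) :
    (∀ t : ℝ, 0 ≤ t → 0 < c t) ∧ Tendsto c atTop (nhds 0) := by
  change ∀ t : ℝ, 0 < t → c t = 2 * (-log (Gamma (t + 1)) + t * deriv (log ∘ Gamma) (t + 1)) / t ^ 2
    at hct
  set ψ₁ := deriv (log ∘ Gamma) 1
  have hpos : ∀ t : ℝ, 0 ≤ t → 0 < c t := by
    intro t ht
    rcases ht.eq_or_lt with rfl | ht
    · rw [hc0]; positivity
    · have := log_Gamma_add_one_lt_mul_deriv ht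
      rw [hct t ht]
      exact div_pos (by linarith) (by positivity)
  have hle : ∀ t : ℝ, 0 < t → c t ≤ 2 * (log (t + 1) / t - ψ₁ / t) := by
    intro t ht
    have hψ := mul_le_mul_of_nonneg_left (deriv_log_Gamma_le_log (by linarith : 0 < t + 1)) ht.le
    have hΓ := mul_deriv_log_Gamma_one_le ht
    rw [hct t ht, div_le_iff₀ (by positivity)]
    field_simp
    nlinarith
  have hbound : Tendsto (fun t => 2 * (log (t + 1) / t - ψ₁ / t)) atTop (nhds 0) := by
    simpa using (tendsto_log_add_one_div_atTop.sub
      ((tendsto_const_nhds (x := ψ₁)).div_atTop tendsto_id)).const_mul 2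
  refine ⟨hpos, tendsto_of_tendsto_of_tendsto_of_le_of_le' tendsto_const_nhds hbound ?_ ?_⟩
  · filter_upwards [eventually_ge_atTop 0] with t ht using (hpos t ht).le
  · filter_upwards [eventually_gt_atTop 0] with t ht using hle t ht
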